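/- arXiv:2307.09951 — 4 statements merged into one kernel-verified Lean document; each statement's English description precedes it below -/
import Mathlib

section
/- Let μ be a measure on a measurable space S, f : S → S measurable, and b ⊆ S measurable. Define the denotational while-loop semantics W(μ) := Σ_{m=0}^∞ restrict_{bᶜ}( (f_* ∘ restrict_b)^m (μ) ), and the operational semantics as the partial function F(ρ) = f^{m(ρ)}(ρ) where m(ρ) = min{ j : f^j(ρ) ∉ b }, when it exists. Then for every measurable set B, W(μ)(B) = μ(F⁻¹[B]). -/
open Set MeasureTheory

/-- Correctness of the operational semantics of a while loop with guard `b` and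
body `f` with respect to Kozen's denotational semantics
`W(μ) = Σ_m restrict_{bᶜ}((f_* ∘ restrict_b)^m μ)`. -/
theorem stmt_4 {S : Type*} [MeasurableSpace S] (μ : Measure S)
    (f : S → S) (hf : Measurable f) (b : Set S) (hb : MeasurableSet b)
    (B : Set S) (hB : MeasurableSet B) :
    (∑' m : ℕ, (((fun ν : Measure S => Measure.map f (ν.restrict b))^[m] μ).restrict bᶜ) B)
      = μ {ρ | ∃ m, (∀ j < m, f^[j] ρ ∈ b) ∧ f^[m] ρ ∉ b ∧ f^[m] ρ ∈ B} := by
  set step : Measure S → Measure S := fun ν => Measure.map f (ν.restrict b) with hstep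
  set G : ℕ → Set S := fun m => {ρ : S | ∀ j < m, f^[j] ρ ∈ b} with hG
  have hGmeas : ∀ m, MeasurableSet (G m) := by
    intro m
    have : G m = ⋂ j ∈ Finset.range m, f^[j] ⁻¹' b := by
      ext ρ; simp [hG]
    rw [this]
    exact Finset.measurableSet_biInter _ fun j _ => (hf.iterate j) hb
  have key : ∀ m, step^[m] μ = Measure.map f^[m] (μ.restrict (G m)) := by
    intro m
    induction m with
    | zero =>
        simp only [Function.iterate_zero, id_eq]
        have : G 0 = univ := by ext ρ; simp [hG]
        rw [this, Measure.restrict_univ, Measure.map_id]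
    | succ m ih =>
        rw [Function.iterate_succ_apply', ih, hstep]
        simp only
        rw [Measure.restrict_map (hf.iterate m) hb,
          Measure.map_map hf (hf.iterate m),
          Measure.restrict_restrict ((hf.iterate m) hb)]
        have h1 : f ∘ f^[m] = f^[m + 1] := (Function.iterate_succ' f m).symm
        have h2 : f^[m] ⁻¹' b ∩ G m = G (m + 1) := by
          ext ρ
          simp only [hG, mem_inter_iff, mem_preimage, mem_setOf_eq]
          constructor
          · rintro ⟨h, h'⟩ j hj
            rcases Nat.lt_succ_iff_lt_or_eq.mp hj with hj | hj
            · exact h' j hj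
            · simpa [hj] using h
          · intro h
            exact ⟨h m (Nat.lt_succ_self m), fun j hj => h j (hj.trans (Nat.lt_succ_self m))⟩
        rw [h1, h2]
  set A : ℕ → Set S := fun m => {ρ : S | (∀ j < m, f^[j] ρ ∈ b) ∧ f^[m] ρ ∉ b ∧ f^[m] ρ ∈ B}
    with hA
  have hAmeas : ∀ m, MeasurableSet (A m) := by
    intro m
    have : A m = G m ∩ f^[m] ⁻¹' (B ∩ bᶜ) := by
      ext ρ; simp [hA, hG, and_comm, and_assoc]
    rw [this]
    exact (hGmeas m).inter ((hf.iterate m) (hB.inter hb.compl))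
  have term : ∀ m, (step^[m] μ).restrict bᶜ B = μ (A m) := by
    intro m
    rw [key m, Measure.restrict_apply hB,
      Measure.map_apply (hf.iterate m) (hB.inter hb.compl),
      Measure.restrict_apply ((hf.iterate m) (hB.inter hb.compl))]
    congr 1
    ext ρ; simp [hA, hG, and_comm, and_assoc]
  have hdisj' : ∀ m n, m < n → Disjoint (A m) (A n) := by
    intro m n h
    refine Set.disjoint_left.mpr fun ρ hm hn => ?_
    exact hm.2.1 (hn.1 m h)
  have hdisj : Pairwise (Function.onFun Disjoint A) := by
    intro m n hmn
    rcases hmn.lt_or_gt with h | h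
    · exact hdisj' m n h
    · exact (hdisj' n m h).symm
  calc (∑' m : ℕ, (step^[m] μ).restrict bᶜ B) = ∑' m : ℕ, μ (A m) := by
        exact tsum_congr term
    _ = μ (⋃ m, A m) := (measure_iUnion hdisj hAmeas).symm
    _ = μ {ρ | ∃ m, (∀ j < m, f^[j] ρ ∈ b) ∧ f^[m] ρ ∉ b ∧ f^[m] ρ ∈ B} := by
        congr 1
        ext ρ; simp [hA]
end

section
/- Let σ : Fin n → SE be a symbolic substitution in n program variables, interpreted at sampling index k as the function [σ]_k : ℝ^n × ℝ^ℕ → ℝ^n × ℝ^ℕ sending ρ to (values of σ applied to ρ, followed by the sample stream of ρ shifted left by k). Then left-shift composition holds: for substitutions σ, σ' and indices k, k', the composition [σ']_{k'} ∘ [σ]_k agrees with [σ'']_{k+k'} for the substitution σ'' obtained by applying σ to each expression of σ' after shifting σ''s symbolic sample variables y_j to y_{j+k}. In particular, for the identity substitution ε with index 0, [ε]_0 is the identity function on ℝ^n × ℝ^ℕ, and [σ]_k ∘ [ε]_0 = [σ]_k. -/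
/-- Symbolic expressions over `n` program variables: rational constants,
program variables `x_i`, sample variables `y_j`, and operator applications. -/
inductive SE (n : ℕ) : Type
  | const : ℚ → SE n
  | var : Fin n → SE n
  | sample : ℕ → SE n
  | op : (m : ℕ) → ((Fin m → ℝ) → ℝ) → (Fin m → SE n) → SE n

namespace SE

/-- Interpretation of a symbolic expression on a state
`ρ ∈ ℝⁿ × ℝ^ℕ` (program values, sample stream). -/
def interp {n : ℕ} : SE n → ((Fin n → ℝ) × (ℕ → ℝ)) → ℝ
  | const q, _ => (q : ℝ)
  | var i, ρ => ρ.1 i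
  | sample j, ρ => ρ.2 j
  | op _ f a, ρ => f (fun i => (a i).interp ρ)

/-- Shift all sample variables `y_j` to `y_{j+k}`. -/
def shift {n : ℕ} (k : ℕ) : SE n → SE n
  | const q => const q
  | var i => var i
  | sample j => sample (j + k)
  | op m f a => op m f (fun i => (a i).shift k)

/-- Apply a substitution `σ` to the program variables of an expression. -/
def subst {n : ℕ} (σ : Fin n → SE n) : SE n → SE n
  | const q => const q
  | var i => σ i
  | sample j => sample j
  | op m f a => op m f (fun i => (a i).subst σ)

end SE

/-- Interpretation of a symbolic substitution `σ` at sampling index `k` as a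
state transformer on `ℝⁿ × ℝ^ℕ`. -/
def interpSub {n : ℕ} (σ : Fin n → SE n) (k : ℕ) :
    ((Fin n → ℝ) × (ℕ → ℝ)) → ((Fin n → ℝ) × (ℕ → ℝ)) :=
  fun ρ => (fun i => (σ i).interp ρ, fun ℓ => ρ.2 (k + ℓ))

lemma interp_shift_subst {n : ℕ} (σ : Fin n → SE n) (k : ℕ) (e : SE n)
    (ρ : (Fin n → ℝ) × (ℕ → ℝ)) :
    ((e.shift k).subst σ).interp ρ = e.interp (interpSub σ k ρ) := by
  induction e with
  | const q => rfl
  | var i => rfl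
  | sample j => simp [SE.shift, SE.subst, SE.interp, interpSub, Nat.add_comm]
  | op m f a ih => simp only [SE.shift, SE.subst, SE.interp]; exact congrArg f (funext fun i => ih i)

/-- Composition of interpreted substitutions: `[σ']_{k'} ∘ [σ]_k = [σ'']_{k+k'}`
where `σ''` applies `σ` to each expression of `σ'` after shifting the sample
variables of `σ'` by `k`; moreover the identity substitution at index `0`
interprets as the identity and is a unit for this composition. -/
theorem stmt_7 {n : ℕ} (σ σ' : Fin n → SE n) (k k' : ℕ) :
    interpSub (fun i => ((σ' i).shift k).subst σ) (k + k')
      = interpSub σ' k' ∘ interpSub σ k ∧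
    interpSub (fun i : Fin n => SE.var i) 0 = id ∧
    interpSub σ k ∘ interpSub (fun i : Fin n => SE.var i) 0 = interpSub σ k := by
  refine ⟨?_, ?_, ?_⟩
  · funext ρ
    simp only [interpSub, Function.comp_apply, interp_shift_subst]
    refine Prod.ext rfl ?_
    funext ℓ
    simp [interpSub, Nat.add_assoc]
  · funext ρ
    simp [interpSub, SE.interp]
  · funext ρ
    simp [interpSub, SE.interp]
end

section
/- Disjointness of loop-unrolling path conditions: let S be a set, b ⊆ S, and let F_q be a collection of triples (F, B, O) with F : S → S and B ⊆ S whose B-components are pairwise disjoint among distinct triples. Define Φ(𝔉) := { (F∘F_q, b ∩ B_q ∩ F_q⁻¹[B], O_q ∩ F_q⁻¹[O]) : (F,B,O) ∈ 𝔉, (F_q,B_q,O_q) ∈ F_q } and 𝔉_0 := { (id, bᶜ, S) }. Then for all m, m' ∈ ℕ with (m, triple) ≠ (m', triple'), any triple in Φ^m(𝔉_0) and any distinct triple in Φ^{m'}(𝔉_0) have disjoint B-components. In particular, the B-components occurring in ⋃_m Φ^m(𝔉_0) are pairwise disjoint. -/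
/-- One more guarded iteration of the loop body semantics `Fq`:
`Φ(𝔉) = { (F∘F_q, b ∩ B_q ∩ F_q⁻¹[B], O_q ∩ F_q⁻¹[O]) }`. -/
def loopPhi {S : Type*} (b : Set S) (Fq : Set ((S → S) × Set S × Set S)) :
    Set ((S → S) × Set S × Set S) → Set ((S → S) × Set S × Set S) :=
  fun 𝔉 => Set.image2
    (fun t tq => (t.1 ∘ tq.1, b ∩ tq.2.1 ∩ tq.1 ⁻¹' t.2.1, tq.2.2 ∩ tq.1 ⁻¹' t.2.2))
    𝔉 Fq

/-- Disjointness of loop-unrolling path conditions: if the `B`-components of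
`Fq` are pairwise disjoint, then so are the `B`-components of all the triples
occurring in `⋃ m, Φ^m({(id, bᶜ, S)})`, across all levels. -/
theorem stmt_13 {S : Type*} (b : Set S)
    (Fq : Set ((S → S) × Set S × Set S))
    (hFq : ∀ t ∈ Fq, ∀ t' ∈ Fq, t ≠ t' → Disjoint t.2.1 t'.2.1) :
    ∀ (m m' : ℕ) (t t' : (S → S) × Set S × Set S),
      t ∈ (loopPhi b Fq)^[m] {((id : S → S), bᶜ, (Set.univ : Set S))} →
      t' ∈ (loopPhi b Fq)^[m'] {((id : S → S), bᶜ, (Set.univ : Set S))} →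
      (m, t) ≠ (m', t') → Disjoint t.2.1 t'.2.1 := by
  intro m
  induction m with
  | zero =>
    intro m' t t' ht ht' hne
    simp only [Function.iterate_zero, id_eq, Set.mem_singleton_iff] at ht
    subst ht
    cases m' with
    | zero =>
      simp only [Function.iterate_zero, id_eq, Set.mem_singleton_iff] at ht'
      exact absurd (by rw [ht']) hne
    | succ k =>
      rw [Function.iterate_succ_apply'] at ht'
      simp only [loopPhi, Set.mem_image2] at ht'
      obtain ⟨s, hs, q, hq, rfl⟩ := ht'
      exact Set.disjoint_left.mpr fun x hx hx' => hx hx'.1.1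
  | succ n ih =>
    intro m' t t' ht ht' hne
    rw [Function.iterate_succ_apply'] at ht
    simp only [loopPhi, Set.mem_image2] at ht
    obtain ⟨s, hs, q, hq, rfl⟩ := ht
    cases m' with
    | zero =>
      simp only [Function.iterate_zero, id_eq, Set.mem_singleton_iff] at ht'
      subst ht'
      exact Set.disjoint_right.mpr fun x hx hx' => hx hx'.1.1
    | succ k =>
      rw [Function.iterate_succ_apply'] at ht'
      simp only [loopPhi, Set.mem_image2] at ht'
      obtain ⟨s', hs', q', hq', rfl⟩ := ht'
      by_cases hqq : q = q'
      · subst hqq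
        have hss : (n, s) ≠ (k, s') := by
          rintro h
          obtain ⟨rfl, rfl⟩ := Prod.mk.injEq .. ▸ h
          exact hne rfl
        have hD := ih k s s' hs hs' hss
        exact Set.disjoint_left.mpr fun x hx hx' =>
          Set.disjoint_left.mp hD hx.2 hx'.2
      · have hD := hFq q hq q' hq' hqq
        exact Set.disjoint_left.mpr fun x hx hx' =>
          Set.disjoint_left.mp hD hx.1.2 hx'.1.2
end

section
/- Operational-symbolic correspondence for guarded iteration: let S be a set, b ⊆ S, and f_q : S → Option S a partial function. Suppose F_q is a collection of triples (F, B, O) with F : S → S, B, O ⊆ S such that: for all ρ ∈ S, f_q(ρ) = some ρ' iff there exists (F,B,O) ∈ F_q with ρ ∈ B ∩ O, and in that case F(ρ) = ρ'. Define the partial loop function f_w(ρ) := f_q^m(ρ) where m = min{ j : f_q^j(ρ) defined and ∉ b }, and define 𝔉_w := ⋃_{m≥0} Φ^m({(id, bᶜ, S)}) with Φ as the one-more-iteration transformer (Φ(𝔉) = { (F∘F', b ∩ B' ∩ F'⁻¹[B], O' ∩ F'⁻¹[O]) : (F,B,O)∈𝔉, (F',B',O')∈F_q }). Then for every ρ ∈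 S: f_w(ρ) = some ρ' iff there exists (F,B,O) ∈ 𝔉_w with ρ ∈ B ∩ O, and in that case F(ρ) = ρ'. -/
/-- `j`-fold iterated application of a partial function `fq : S → Option S`. -/
def optIter {S : Type*} (fq : S → Option S) : ℕ → S → Option S
  | 0, ρ => some ρ
  | j + 1, ρ => (optIter fq j ρ).bind fq

lemma optIter_succ' {S : Type*} (fq : S → Option S) (m : ℕ) (ρ : S) :
    optIter fq (m + 1) ρ = (fq ρ).bind (optIter fq m) := by
  induction m generalizing ρ with
  | zero =>
    show (some ρ).bind fq = _
    cases hfq : fq ρ <;> simp [optIter, hfq]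
  | succ m ih =>
    show (optIter fq (m + 1) ρ).bind fq = _
    rw [ih]
    cases hfq : fq ρ <;> simp [optIter, hfq]

lemma key {S : Type*} (b : Set S) (fq : S → Option S)
    (Fq : Set ((S → S) × Set S × Set S))
    (h : ∀ ρ ρ', fq ρ = some ρ' ↔ ∃ t ∈ Fq, ρ ∈ t.2.1 ∩ t.2.2 ∧ t.1 ρ = ρ') (m : ℕ) :
    ∀ ρ ρ', (optIter fq m ρ = some ρ' ∧ ρ' ∉ b ∧
        ∀ j < m, ∀ σ, optIter fq j ρ = some σ → σ ∈ b)
      ↔ ∃ t ∈ (loopPhi b Fq)^[m] {((id : S → S), bᶜ, (Set.univ : Set S))},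
          ρ ∈ t.2.1 ∩ t.2.2 ∧ t.1 ρ = ρ' := by
  induction m with
  | zero =>
    intro ρ ρ'
    constructor
    · rintro ⟨hρ, hb, -⟩
      have : ρ = ρ' := by simpa [optIter] using hρ
      subst this
      exact ⟨_, rfl, ⟨hb, trivial⟩, rfl⟩
    · rintro ⟨t, ht, ⟨h1, h2⟩, h3⟩
      simp only [Function.iterate_zero, id_eq, Set.mem_singleton_iff] at ht
      subst ht
      refine ⟨by simpa [optIter] using h3, ?_, by intro j hj; omega⟩
      rw [← h3]; exact h1
  | succ m ih =>
    intro ρ ρ'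
    rw [Function.iterate_succ_apply']
    constructor
    · rintro ⟨hρ, hb, hguard⟩
      rw [optIter_succ'] at hρ
      obtain ⟨σ, hσ, hrest⟩ : ∃ σ, fq ρ = some σ ∧ optIter fq m σ = some ρ' := by
        cases hfq : fq ρ with
        | none => rw [hfq] at hρ; simp at hρ
        | some σ => rw [hfq] at hρ; exact ⟨σ, rfl, hρ⟩
      obtain ⟨tq, htq, ⟨hB', hO'⟩, hF'⟩ := (h ρ σ).mp hσ
      have hσguard : ∀ j < m, ∀ τ, optIter fq j σ = some τ → τ ∈ b := by
        intro j hj τ hτ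
        apply hguard (j + 1) (by omega) τ
        rw [optIter_succ', hσ]; exact hτ
      obtain ⟨t, ht, ⟨hB, hO⟩, hF⟩ := (ih σ ρ').mp ⟨hrest, hb, hσguard⟩
      refine ⟨(t.1 ∘ tq.1, b ∩ tq.2.1 ∩ tq.1 ⁻¹' t.2.1, tq.2.2 ∩ tq.1 ⁻¹' t.2.2),
        Set.mem_image2_of_mem ht htq, ⟨⟨⟨?_, hB'⟩, ?_⟩, ⟨hO', ?_⟩⟩, ?_⟩
      · exact hguard 0 (by omega) ρ rfl
      · show tq.1 ρ ∈ t.2.1; rw [hF']; exact hB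
      · show tq.1 ρ ∈ t.2.2; rw [hF']; exact hO
      · show t.1 (tq.1 ρ) = ρ'; rw [hF']; exact hF
    · rintro ⟨t, ht, hmem, hF⟩
      obtain ⟨t', ht', tq, htq, rfl⟩ := ht
      obtain ⟨⟨⟨hρb, hB'⟩, hB⟩, hO', hO⟩ := hmem
      have hσ : fq ρ = some (tq.1 ρ) := (h ρ _).mpr ⟨tq, htq, ⟨hB', hO'⟩, rfl⟩
      obtain ⟨hrest, hb, hguard⟩ := (ih (tq.1 ρ) ρ').mpr ⟨t', ht', ⟨hB, hO⟩, hF⟩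
      refine ⟨?_, hb, ?_⟩
      · rw [optIter_succ', hσ]; exact hrest
      · intro j hj τ hτ
        cases j with
        | zero =>
          have : ρ = τ := by simpa [optIter] using hτ
          subst this; exact hρb
        | succ j =>
          rw [optIter_succ', hσ] at hτ
          exact hguard j (by omega) τ hτ

/-- Operational–symbolic correspondence for guarded iteration: if the partial
body `fq` corresponds to the symbolic body semantics `Fq`, then the partial
while-loop function (first exit of the guard `b`) corresponds to the symbolic
loop semantics `⋃ m, Φ^m({(id, bᶜ, S)})`. -/
theorem stmt_18 {S : Type*} (b : Set S)
    (fq : S → Option S) (Fq : Set ((S → S) × Set S × Set S))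
    (h : ∀ ρ ρ', fq ρ = some ρ' ↔ ∃ t ∈ Fq, ρ ∈ t.2.1 ∩ t.2.2 ∧ t.1 ρ = ρ') :
    ∀ ρ ρ',
      (∃ m, optIter fq m ρ = some ρ' ∧ ρ' ∉ b ∧
        ∀ j < m, ∀ σ, optIter fq j ρ = some σ → σ ∈ b)
      ↔ ∃ t ∈ ⋃ m : ℕ,
            (loopPhi b Fq)^[m] {((id : S → S), bᶜ, (Set.univ : Set S))},
          ρ ∈ t.2.1 ∩ t.2.2 ∧ t.1 ρ = ρ' := by
  intro ρ ρ'
  constructor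
  · rintro ⟨m, hm⟩
    obtain ⟨t, ht, h2⟩ := (key b fq Fq h m ρ ρ').mp hm
    exact ⟨t, Set.mem_iUnion.mpr ⟨m, ht⟩, h2⟩
  · rintro ⟨t, ht, h2⟩
    obtain ⟨m, ht⟩ := Set.mem_iUnion.mp ht
    exact ⟨m, (key b fq Fq h m ρ ρ').mpr ⟨t, ht, h2⟩⟩
end
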